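/- The invariant ring ℂ[Mat_{n×n}]^{GL(n,ℂ)} for the conjugation action is generated by the coefficients of the characteristic polynomial; equivalently, two diagonalizable matrices lie in the same closure-equivalence class of conjugation orbits if and only if they have the same characteristic polynomial, and every matrix has the associated diagonal matrix of its eigenvalues in the closure of its conjugation orbit. -/

import Mathlib

/-!
Over an algebraically closed field every endomorphism has an invariant hyperplane, the kernel
of an eigenvector of its transpose; inducting on the dimension, `A` is conjugate to a lower
triangular matrix `T`. Conjugating `T` by `diag(t ^ i)` multiplies its `(i, j)` entry by
`t ^ (i - j)`, which extends continuously to `t = 0` with value `diagonal T.diag`. So the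
diagonal of `T` lies in the closure of the orbit of `A`, and it has the characteristic
polynomial `∏ (X - T i i)` of `T`, hence of `A`.
-/

open Filter Topology Module Submodule Polynomial

namespace Module.End

variable {K : Type*} [Field K] [IsAlgClosed K]

theorem exists_dual_ne_zero_ker_invariant {V : Type*} [AddCommGroup V] [Module K V]
    [FiniteDimensional K V] [Nontrivial V] (f : End K V) :
    ∃ φ : Dual K V, φ ≠ 0 ∧ ∀ x ∈ LinearMap.ker φ, f x ∈ LinearMap.ker φ := by
  obtain ⟨μ, hμ⟩ := exists_eigenvalue (Dual.transpose (R := K) f)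
  obtain ⟨φ, hφ⟩ := hμ.exists_hasEigenvector
  refine ⟨φ, hφ.2, fun x hx => ?_⟩
  have hφf : φ (f x) = μ * φ x := LinearMap.congr_fun hφ.apply_eq_smul x
  rw [LinearMap.mem_ker] at hx ⊢
  rw [hφf, hx, mul_zero]

theorem exists_basis_apply_mem_span_image_Ici {n : ℕ} {V : Type*} [AddCommGroup V] [Module K V]
    [FiniteDimensional K V] (hV : finrank K V = n) (f : End K V) :
    ∃ b : Basis (Fin n) K V, ∀ j, f (b j) ∈ span K (b '' Set.Ici j) := by
  induction n generalizing V with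
  | zero => exact ⟨finBasisOfFinrankEq K V hV, fun j => j.elim0⟩
  | succ n ih =>
    have : Nontrivial V := nontrivial_of_finrank_eq_succ hV
    obtain ⟨φ, hφ, hf⟩ := exists_dual_ne_zero_ker_invariant f
    obtain ⟨c, hc⟩ := ih (by have := φ.finrank_ker_add_one_of_ne_zero hφ; omega) (f.restrict hf)
    obtain ⟨y, hy⟩ : ∃ y, φ y ≠ 0 := by simpa [DFunLike.ne_iff] using hφ
    let b := Basis.mkFinCons y c
      (fun a x hx h => by simpa [LinearMap.mem_ker.mp hx, hy] using congrArg φ h)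
      (fun z => ⟨-(φ z / φ y), by simp [div_mul_cancel₀ _ hy]⟩)
    refine ⟨b, Fin.cases ?_ fun j => ?_⟩
    · simp [Set.image_univ, b.span_eq]
    · have hcj := mem_map_of_mem (f := (LinearMap.ker φ).subtype) (hc j)
      rw [map_span, ← Set.image_comp] at hcj
      refine span_mono ?_ (by simpa [b] using hcj)
      rintro _ ⟨i, hi, rfl⟩
      exact ⟨i.succ, Fin.succ_le_succ_iff.mpr hi, by simp [b]⟩

end Module.End

namespace Matrix

section CommRing

variable {ι R : Type*} [Fintype ι] [DecidableEq ι] [CommRing R]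

def conjOrbit (A : Matrix ι ι R) : Set (Matrix ι ι R) :=
  {C | ∃ g : GL ι R, C = (g : Matrix ι ι R) * A * ((g⁻¹ : GL ι R) : Matrix ι ι R)}

theorem conjOrbit_subset_of_mem {A B : Matrix ι ι R} (hB : B ∈ conjOrbit A) :
    conjOrbit B ⊆ conjOrbit A := by
  obtain ⟨h, rfl⟩ := hB
  rintro _ ⟨g, rfl⟩
  exact ⟨g * h, by simp [Matrix.mul_assoc]⟩

theorem charpoly_of_isLowerTriangular [LinearOrder ι] (M : Matrix ι ι R)
    (h : M.IsLowerTriangular) : M.charpoly = ∏ i, (X - C (M i i)) := by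
  simp [charpoly, det_of_isLowerTriangular _ h.charmatrix]

end CommRing

theorem exists_isLowerTriangular_conj {K : Type*} [Field K] [IsAlgClosed K] {n : ℕ}
    (A : Matrix (Fin n) (Fin n) K) :
    ∃ g : GL (Fin n) K,
      ((g : Matrix (Fin n) (Fin n) K) * A * (g⁻¹ : GL (Fin n) K)).IsLowerTriangular := by
  obtain ⟨b, hb⟩ := End.exists_basis_apply_mem_span_image_Ici (finrank_fin_fun K) (toLin' A)
  let e := Pi.basisFun K (Fin n)
  let g : GL (Fin n) K := ⟨b.toMatrix e, e.toMatrix b, b.toMatrix_mul_toMatrix_flip e,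
    e.toMatrix_mul_toMatrix_flip b⟩
  have hconj : (g : Matrix (Fin n) (Fin n) K) * A * (g⁻¹ : GL (Fin n) K) =
      LinearMap.toMatrix b b (toLin' A) := by
    rw [← basis_toMatrix_mul_linearMap_toMatrix_mul_basis_toMatrix b e b e,
      LinearMap.toMatrix_eq_toMatrix', LinearMap.toMatrix'_toLin']
    rfl
  refine ⟨g, hconj ▸ fun i j (hij : i < j) => ?_⟩
  rw [LinearMap.toMatrix_apply, ← Finsupp.notMem_support_iff]
  exact fun hi => not_le.mpr hij (b.mem_span_image.mp (hb j) hi)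

theorem diagonal_diag_mem_closure_conjOrbit {K : Type*} [Field K] [TopologicalSpace K]
    [IsTopologicalRing K] [(𝓝[≠] (0 : K)).NeBot] {n : ℕ} {T : Matrix (Fin n) (Fin n) K}
    (hT : T.IsLowerTriangular) : diagonal T.diag ∈ closure (conjOrbit T) := by
  let M : K → Matrix (Fin n) (Fin n) K := fun t => of fun i j => t ^ ((i : ℕ) - j) * T i j
  have hM : Continuous M := by fun_prop
  have hM0 : M 0 = diagonal T.diag := by
    ext i j
    rcases lt_trichotomy i j with hij | rfl | hij
    · simp [M, hT hij, diagonal_apply_ne _ hij.ne]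
    · simp [M]
    · simp [M, diagonal_apply_ne _ hij.ne', Nat.sub_ne_zero_of_lt (show (j : ℕ) < i from hij)]
  have hM_mem : ∀ t ≠ (0 : K), M t ∈ conjOrbit T := by
    intro t ht
    let D : GL (Fin n) K := ⟨diagonal fun i => t ^ (i : ℕ), diagonal fun i => t⁻¹ ^ (i : ℕ),
      by simp [ht], by simp [ht]⟩
    refine ⟨D, ?_⟩
    ext i j
    rw [Units.inv_mk, mul_diagonal, diagonal_mul]
    rcases lt_or_ge i j with hij | hji
    · simp [M, hT hij]
    · rw [← Nat.sub_add_cancel (show (j : ℕ) ≤ i from hji), pow_add, inv_pow]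
      simp only [M, of_apply]
      field_simp
  exact hM0 ▸ mem_closure_of_tendsto (hM.tendsto 0 |>.mono_left nhdsWithin_le_nhds)
    (eventually_nhdsWithin_of_forall (s := {0}ᶜ) hM_mem)

end Matrix

open Matrix

/-- Every complex matrix `A` has a diagonalizable matrix with the same
characteristic polynomial (e.g. the diagonal matrix of its eigenvalues, the
semisimple part of its Jordan form) in the closure of its conjugation orbit. -/
theorem stmt_10 (n : ℕ) (A : Matrix (Fin n) (Fin n) ℂ) :
    ∃ B : Matrix (Fin n) (Fin n) ℂ,
      (∃ g : GL (Fin n) ℂ, ∃ d : Fin n → ℂ,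
        (g : Matrix (Fin n) (Fin n) ℂ) * B * ((g⁻¹ : GL (Fin n) ℂ) : Matrix (Fin n) (Fin n) ℂ)
          = Matrix.diagonal d) ∧
      B.charpoly = A.charpoly ∧
      B ∈ closure {C : Matrix (Fin n) (Fin n) ℂ | ∃ g : GL (Fin n) ℂ,
        C = (g : Matrix (Fin n) (Fin n) ℂ) * A *
              ((g⁻¹ : GL (Fin n) ℂ) : Matrix (Fin n) (Fin n) ℂ)} := by
  obtain ⟨g, hT⟩ := exists_isLowerTriangular_conj A
  set T := (g : Matrix (Fin n) (Fin n) ℂ) * A * ((g⁻¹ : GL (Fin n) ℂ) : Matrix (Fin n) (Fin n) ℂ)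
    with hT_def
  refine ⟨diagonal T.diag, ⟨1, T.diag, by simp⟩, ?_,
    closure_mono (conjOrbit_subset_of_mem ⟨g, hT_def⟩) (diagonal_diag_mem_closure_conjOrbit hT)⟩
  have hT_charpoly : T.charpoly = A.charpoly := by
    rw [hT_def, coe_units_inv, charpoly_units_conj]
  rw [charpoly_diagonal, ← hT_charpoly, charpoly_of_isLowerTriangular T hT]
  rfl
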